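/- arXiv:2011.14801 — 5 statements merged into one kernel-verified Lean document; each statement's English description precedes it below -/
import Mathlib

section
/- Let G be a finite simple graph, 𝒱 = (𝒱_1,…,𝒱_p) a partition of V(G), k ≥ 1, and U ⊆ V(G) such that G − U is a cluster graph with connected components C_1,…,C_r; write comp(v) = j if v ∈ V(G)∖U lies in C_j. Let X ⊆ U contain at most one vertex of each part of 𝒱, and let φ' be a proper k-coloring of the subgraph of G induced by X. Let S ⊆ [p] be the set of indices of parts not hit by X. If there exists a selective set V* ⊆ V(G) with V* ∩ U = X such that the subgraph of G induced by V* admits a proper k-coloring extending φ', then there exist functions s : S → V(G)∖U and c : S → [k] such that: (i) s(ℓ) ∈ 𝒱_ℓ for every ℓ ∈ S; (ii) for every ℓ ∈ S, no neighbor of s(ℓ) in X receives color c(ℓ) under φ'; and (iii) the map ℓ ↦ (c(ℓ), comp(s(ℓ))) is injective on S. -/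
/-!
Fix a coloring `ψ` of `G[V*]` extending `φ'` and let `s ℓ` be the vertex of `V*` in part `ℓ`,
with color `c ℓ := ψ (s ℓ)`. For `ℓ ∈ S` the vertex `s ℓ` is not in `X = V* ∩ U`, so it lies
in `G - U`; its neighbours in `X` lie in `V*` and therefore avoid its color. Injectivity of
`ℓ ↦ (c ℓ, comp (s ℓ))` holds because each component of `G - U` is a clique, on which a proper
coloring is injective, and because distinct parts of the partition have distinct representatives.
-/

namespace Function

theorem injective_of_pairwise_disjoint_of_mem {ι α : Type*} {P : ι → Finset α}
    (hP : Pairwise (Disjoint on P)) {s : ι → α} (hs : ∀ i, s i ∈ P i) : Injective s :=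
  fun i j hij => by_contra fun hne => Finset.disjoint_left.mp (hP hne) (hs i) (hij ▸ hs j)

end Function

namespace SimpleGraph

variable {V α β : Type*} (G : SimpleGraph V)

theorem injOn_color_comp_of_isCluster {U W : Set V} {comp : V → β}
    (hcluster : ∀ v w, v ∉ U → w ∉ U → (comp v = comp w ↔ v = w ∨ G.Adj v w))
    {ψ : V → α} (hψ : ∀ a ∈ W, ∀ b ∈ W, G.Adj a b → ψ a ≠ ψ b) :
    Set.InjOn (fun v => (ψ v, comp v)) (W \ U) := by
  rintro a ⟨haW, haU⟩ b ⟨hbW, hbU⟩ hab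
  obtain ⟨hcolor, hcomp⟩ := Prod.mk.inj hab
  exact ((hcluster a b haU hbU).mp hcomp).resolve_right fun hadj => hψ a haW b hbW hadj hcolor

end SimpleGraph

theorem selective_coloring_cluster_necessity_general
    {V : Type*} [DecidableEq V] (G : SimpleGraph V)
    (p : ℕ) (𝒱 : Fin p → Finset V)
    (hdisj : ∀ ℓ ℓ' : Fin p, ℓ ≠ ℓ' → Disjoint (𝒱 ℓ) (𝒱 ℓ'))
    (k : ℕ)
    (U : Finset V) (r : ℕ) (comp : V → Fin r)
    (hcluster : ∀ v w : V, v ∉ U → w ∉ U →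
      (comp v = comp w ↔ (v = w ∨ G.Adj v w)))
    (X : Finset V)
    (φ' : V → Fin k)
    (S : Finset (Fin p)) (hS : ∀ ℓ : Fin p, ℓ ∈ S ↔ X ∩ 𝒱 ℓ = ∅)
    (Vstar : Finset V) (hVstarU : Vstar ∩ U = X)
    (hselective : ∀ ℓ : Fin p, (Vstar ∩ 𝒱 ℓ).card = 1)
    (hcol : ∃ ψ : V → Fin k, (∀ x ∈ X, ψ x = φ' x) ∧
      ∀ a ∈ Vstar, ∀ b ∈ Vstar, G.Adj a b → ψ a ≠ ψ b) :
    ∃ (s : Fin p → V) (c : Fin p → Fin k),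
      (∀ ℓ ∈ S, s ℓ ∉ U ∧ s ℓ ∈ 𝒱 ℓ) ∧
      (∀ ℓ ∈ S, ∀ w ∈ X, G.Adj (s ℓ) w → φ' w ≠ c ℓ) ∧
      (∀ ℓ ∈ S, ∀ ℓ' ∈ S, (c ℓ, comp (s ℓ)) = (c ℓ', comp (s ℓ')) → ℓ = ℓ') := by
  obtain ⟨ψ, hψX, hψ⟩ := hcol
  choose s hs using fun ℓ => Finset.card_pos.mp ((hselective ℓ).symm ▸ Nat.one_pos)
  have hsVstar ℓ : s ℓ ∈ Vstar := (Finset.mem_inter.mp (hs ℓ)).1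
  have hs𝒱 ℓ : s ℓ ∈ 𝒱 ℓ := (Finset.mem_inter.mp (hs ℓ)).2
  have hsU : ∀ ℓ ∈ S, s ℓ ∉ U := fun ℓ hℓ hsℓU => by
    have : s ℓ ∈ X ∩ 𝒱 ℓ := Finset.mem_inter.mpr
      ⟨hVstarU ▸ Finset.mem_inter.mpr ⟨hsVstar ℓ, hsℓU⟩, hs𝒱 ℓ⟩
    simp [(hS ℓ).mp hℓ] at this
  have hXVstar : X ⊆ Vstar := hVstarU ▸ Finset.inter_subset_left
  have hinj : Set.InjOn (fun ℓ => (ψ (s ℓ), comp (s ℓ))) S :=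
    (G.injOn_color_comp_of_isCluster hcluster hψ).comp
      (Function.injective_of_pairwise_disjoint_of_mem hdisj hs𝒱).injOn
      fun ℓ hℓ => ⟨hsVstar ℓ, hsU ℓ hℓ⟩
  refine ⟨s, fun ℓ => ψ (s ℓ), fun ℓ hℓ => ⟨hsU ℓ hℓ, hs𝒱 ℓ⟩, ?_,
    fun _ hℓ _ hℓ' => hinj hℓ hℓ'⟩
  intro ℓ _ w hw hadj
  rw [← hψX w hw]
  exact hψ w (hXVstar hw) (s ℓ) (hsVstar ℓ) hadj.symm

/-- Let `G` be a finite simple graph, `𝒱 = (𝒱_1, …, 𝒱_p)` a partition of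
`V(G)`, `k ≥ 1`, and `U ⊆ V(G)` such that `G - U` is a cluster graph whose connected
components are labelled by `comp : V → Fin r` (so, for `v, w ∉ U`, `comp v = comp w` iff
`v = w` or `v` and `w` are adjacent).  Let `X ⊆ U` contain at most one vertex of each part
of `𝒱`, let `φ'` be a proper `k`-coloring of the subgraph induced by `X`, and let `S` be
the set of indices of parts not hit by `X`.  If there exists a selective set `V*` with
`V* ∩ U = X` whose induced subgraph admits a proper `k`-coloring extending `φ'`, then
there are functions `s : S → V(G) ∖ U` and `c : S → [k]` such that (i) `s ℓ ∈ 𝒱_ℓ` for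
every `ℓ ∈ S`, (ii) no neighbor of `s ℓ` in `X` receives color `c ℓ` under `φ'`, and
(iii) `ℓ ↦ (c ℓ, comp (s ℓ))` is injective on `S`. -/
theorem selective_coloring_cluster_necessity
    {V : Type*} [Fintype V] [DecidableEq V] (G : SimpleGraph V)
    (p : ℕ) (𝒱 : Fin p → Finset V)
    (hdisj : ∀ ℓ ℓ' : Fin p, ℓ ≠ ℓ' → Disjoint (𝒱 ℓ) (𝒱 ℓ'))
    (hcover : ∀ v : V, ∃ ℓ, v ∈ 𝒱 ℓ)
    (k : ℕ) (hk : 1 ≤ k)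
    (U : Finset V) (r : ℕ) (comp : V → Fin r)
    (hcluster : ∀ v w : V, v ∉ U → w ∉ U →
      (comp v = comp w ↔ (v = w ∨ G.Adj v w)))
    (X : Finset V) (hXU : X ⊆ U)
    (hXone : ∀ ℓ : Fin p, (X ∩ 𝒱 ℓ).card ≤ 1)
    (φ' : V → Fin k)
    (hφ' : ∀ a ∈ X, ∀ b ∈ X, G.Adj a b → φ' a ≠ φ' b)
    (S : Finset (Fin p)) (hS : ∀ ℓ : Fin p, ℓ ∈ S ↔ X ∩ 𝒱 ℓ = ∅)
    (Vstar : Finset V) (hVstarU : Vstar ∩ U = X)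
    (hselective : ∀ ℓ : Fin p, (Vstar ∩ 𝒱 ℓ).card = 1)
    (hcol : ∃ ψ : V → Fin k, (∀ x ∈ X, ψ x = φ' x) ∧
      ∀ a ∈ Vstar, ∀ b ∈ Vstar, G.Adj a b → ψ a ≠ ψ b) :
    ∃ (s : Fin p → V) (c : Fin p → Fin k),
      (∀ ℓ ∈ S, s ℓ ∉ U ∧ s ℓ ∈ 𝒱 ℓ) ∧
      (∀ ℓ ∈ S, ∀ w ∈ X, G.Adj (s ℓ) w → φ' w ≠ c ℓ) ∧
      (∀ ℓ ∈ S, ∀ ℓ' ∈ S, (c ℓ, comp (s ℓ)) = (c ℓ', comp (s ℓ')) → ℓ = ℓ') :=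
  selective_coloring_cluster_necessity_general G p 𝒱 hdisj k U r comp hcluster X φ' S hS Vstar
    hVstarU hselective hcol
end

section
/- Let G be a finite simple graph, 𝒱 = (𝒱_1,…,𝒱_p) a partition of V(G), k ≥ 1, and U ⊆ V(G) such that G − U is a cluster graph with connected components C_1,…,C_r; write comp(v) = j if v ∈ V(G)∖U lies in C_j. Let X ⊆ U contain at most one vertex of each part of 𝒱, and let φ' be a proper k-coloring of the subgraph of G induced by X. Let S ⊆ [p] be the set of indices of parts not hit by X. Suppose there exist functions s : S → V(G)∖U and c : S → [k] such that: (i) s(ℓ) ∈ 𝒱_ℓ for every ℓ ∈ S; (ii) for every ℓ ∈ S, no neighbor of s(ℓ) in X receives color c(ℓ) under φ'; and (iii) the map ℓ ↦ (c(ℓ), comp(s(ℓ))) is injective on S. Then the set V* = X ∪ {s(ℓ) : ℓ ∈ S} is selective, and the function equal to φ' on X and to c(ℓ) on s(ℓ) is a proper k-coloring of the subgraph of G induced by V*. -/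
/-!
Distinct parts of the partition receive distinct representatives `s ℓ`, so `X ∪ s(S)` meets
every part exactly once. For properness, an edge inside `X` is handled by `φ'`, an edge between
`X` and `s(S)` by (ii), and an edge inside `s(S)` joins two vertices of one clique of `G - U`;
these share their component, so by (iii) they must differ in colour.
-/

open Finset Function

section Partition

variable {ι V : Type*} {𝒱 : ι → Finset V}

theorem eq_of_mem_of_pairwise_disjoint (h𝒱 : Pairwise (Disjoint on 𝒱)) {i j : ι} {v : V}
    (hi : v ∈ 𝒱 i) (hj : v ∈ 𝒱 j) : i = j :=
  h𝒱.eq (Finset.not_disjoint_iff.2 ⟨v, hi, hj⟩)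

variable [DecidableEq V]

theorem image_inter_part_of_mem (h𝒱 : Pairwise (Disjoint on 𝒱)) {S : Finset ι} {s : ι → V}
    (hs : ∀ i ∈ S, s i ∈ 𝒱 i) {i : ι} (hi : i ∈ S) : S.image s ∩ 𝒱 i = {s i} := by
  refine eq_singleton_iff_unique_mem.2 ⟨mem_inter.2 ⟨mem_image_of_mem s hi, hs i hi⟩, ?_⟩
  rintro _ hv
  obtain ⟨⟨j, hj, rfl⟩, hv⟩ := And.imp_left mem_image.1 (mem_inter.1 hv)
  rw [eq_of_mem_of_pairwise_disjoint h𝒱 (hs j hj) hv]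

theorem image_inter_part_of_notMem (h𝒱 : Pairwise (Disjoint on 𝒱)) {S : Finset ι} {s : ι → V}
    (hs : ∀ i ∈ S, s i ∈ 𝒱 i) {i : ι} (hi : i ∉ S) : S.image s ∩ 𝒱 i = ∅ := by
  refine eq_empty_of_forall_notMem fun _ hv => ?_
  obtain ⟨⟨j, hj, rfl⟩, hv⟩ := And.imp_left mem_image.1 (mem_inter.1 hv)
  exact hi (eq_of_mem_of_pairwise_disjoint h𝒱 (hs j hj) hv ▸ hj)

def IsSelective (𝒱 : ι → Finset V) (Y : Finset V) : Prop :=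
  ∀ i, (Y ∩ 𝒱 i).card = 1

theorem isSelective_union_image (h𝒱 : Pairwise (Disjoint on 𝒱)) {X : Finset V}
    (hX : ∀ i, (X ∩ 𝒱 i).card ≤ 1) {S : Finset ι} (hS : ∀ i, i ∈ S ↔ X ∩ 𝒱 i = ∅)
    {s : ι → V} (hs : ∀ i ∈ S, s i ∈ 𝒱 i) : IsSelective 𝒱 (X ∪ S.image s) := by
  intro i
  rw [union_inter_distrib_right]
  by_cases hi : i ∈ S
  · rw [(hS i).1 hi, image_inter_part_of_mem h𝒱 hs hi, empty_union, card_singleton]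
  · have hpos : 0 < (X ∩ 𝒱 i).card :=
      card_pos.2 (nonempty_iff_ne_empty.2 fun h => hi ((hS i).2 h))
    rw [image_inter_part_of_notMem h𝒱 hs hi, union_empty]
    exact le_antisymm (hX i) hpos

end Partition

section Coloring

variable {V α κ : Type*} {G : SimpleGraph V} {ψ φ : V → α} {A B : Set V}

def IsProperOn (G : SimpleGraph V) (ψ : V → α) (A : Set V) : Prop :=
  ∀ a ∈ A, ∀ b ∈ A, G.Adj a b → ψ a ≠ ψ b

theorem IsProperOn.congr (h : IsProperOn G φ A) (hψ : Set.EqOn ψ φ A) : IsProperOn G ψ A := by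
  intro a ha b hb hab
  rw [hψ ha, hψ hb]
  exact h a ha b hb hab

theorem IsProperOn.union (hA : IsProperOn G ψ A) (hB : IsProperOn G ψ B)
    (hAB : ∀ a ∈ A, ∀ b ∈ B, G.Adj a b → ψ a ≠ ψ b) : IsProperOn G ψ (A ∪ B) := by
  rintro a (ha | ha) b (hb | hb) hab
  · exact hA a ha b hb hab
  · exact hAB a ha b hb hab
  · exact (hAB b hb a ha hab.symm).symm
  · exact hB a ha b hb hab

theorem isProperOn_of_injOn_prod {comp : V → κ} (hinj : Set.InjOn (fun v => (ψ v, comp v)) A)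
    (hcomp : ∀ a ∈ A, ∀ b ∈ A, G.Adj a b → comp a = comp b) : IsProperOn G ψ A :=
  fun a ha b hb hab hψ =>
    G.ne_of_adj hab (hinj ha hb (Prod.ext hψ (hcomp a ha b hb hab)))

end Coloring

section Extend

variable {ι V α : Type*} {S : Set ι} {s : ι → V} {c : ι → α} {φ : V → α}

theorem extend_domRestrict_apply_of_mem (hs : Set.InjOn s S) {i : ι} (hi : i ∈ S) :
    extend (S.domRestrict s) (S.domRestrict c) φ (s i) = c i :=
  (Set.injOn_iff_injective.1 hs).extend_apply _ _ ⟨i, hi⟩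

theorem extend_domRestrict_apply_of_notMem {v : V} (hv : v ∉ s '' S) :
    extend (S.domRestrict s) (S.domRestrict c) φ v = φ v :=
  extend_apply' _ _ _ fun ⟨⟨i, hi⟩, h⟩ => hv ⟨i, hi, h⟩

end Extend

theorem selective_coloring_cluster_sufficiency_general
    {V : Type*} [DecidableEq V] (G : SimpleGraph V)
    (p : ℕ) (𝒱 : Fin p → Finset V)
    (hdisj : ∀ ℓ ℓ' : Fin p, ℓ ≠ ℓ' → Disjoint (𝒱 ℓ) (𝒱 ℓ'))
    (k : ℕ)
    (U : Finset V) (r : ℕ) (comp : V → Fin r)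
    (hcluster : ∀ v w : V, v ∉ U → w ∉ U →
      (comp v = comp w ↔ (v = w ∨ G.Adj v w)))
    (X : Finset V) (hXU : X ⊆ U)
    (hXone : ∀ ℓ : Fin p, (X ∩ 𝒱 ℓ).card ≤ 1)
    (φ' : V → Fin k)
    (hφ' : ∀ a ∈ X, ∀ b ∈ X, G.Adj a b → φ' a ≠ φ' b)
    (S : Finset (Fin p)) (hS : ∀ ℓ : Fin p, ℓ ∈ S ↔ X ∩ 𝒱 ℓ = ∅)
    (s : Fin p → V) (c : Fin p → Fin k)
    (hs : ∀ ℓ ∈ S, s ℓ ∉ U ∧ s ℓ ∈ 𝒱 ℓ)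
    (hc : ∀ ℓ ∈ S, ∀ w ∈ X, G.Adj (s ℓ) w → φ' w ≠ c ℓ)
    (hinj : ∀ ℓ ∈ S, ∀ ℓ' ∈ S, (c ℓ, comp (s ℓ)) = (c ℓ', comp (s ℓ')) → ℓ = ℓ') :
    (∀ ℓ : Fin p, ((X ∪ S.image s) ∩ 𝒱 ℓ).card = 1) ∧
    ∃ ψ : V → Fin k,
      (∀ x ∈ X, ψ x = φ' x) ∧ (∀ ℓ ∈ S, ψ (s ℓ) = c ℓ) ∧
      (∀ a ∈ X ∪ S.image s, ∀ b ∈ X ∪ S.image s, G.Adj a b → ψ a ≠ ψ b) := by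
  have hsU (ℓ) (hℓ : ℓ ∈ S) : s ℓ ∉ U := (hs ℓ hℓ).1
  have hsV (ℓ) (hℓ : ℓ ∈ S) : s ℓ ∈ 𝒱 ℓ := (hs ℓ hℓ).2
  have hs_inj : Set.InjOn s S := fun ℓ hℓ ℓ' hℓ' h =>
    eq_of_mem_of_pairwise_disjoint hdisj (hsV ℓ hℓ) (h ▸ hsV ℓ' hℓ')
  set ψ := extend ((S : Set (Fin p)).domRestrict s) ((S : Set (Fin p)).domRestrict c) φ'
  have ψX : ∀ x ∈ X, ψ x = φ' x := fun x hx =>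
    extend_domRestrict_apply_of_notMem fun ⟨ℓ, hℓ, h⟩ => hsU ℓ hℓ (h ▸ hXU hx)
  have ψs : ∀ ℓ ∈ S, ψ (s ℓ) = c ℓ := fun ℓ hℓ => extend_domRestrict_apply_of_mem hs_inj hℓ
  refine ⟨isSelective_union_image hdisj hXone hS hsV, ψ, ψX, ψs, ?_⟩
  have hproper : IsProperOn G ψ ↑(X ∪ S.image s) := by
    rw [coe_union, coe_image]
    refine (IsProperOn.congr hφ' ψX).union ?_ ?_
    · refine isProperOn_of_injOn_prod (comp := comp) (Set.InjOn.image_of_comp ?_) ?_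
      · exact fun ℓ hℓ ℓ' hℓ' h => hinj ℓ hℓ ℓ' hℓ' (by simpa [ψs ℓ hℓ, ψs ℓ' hℓ'] using h)
      · rintro _ ⟨ℓ, hℓ, rfl⟩ _ ⟨ℓ', hℓ', rfl⟩ hadj
        exact (hcluster _ _ (hsU ℓ hℓ) (hsU ℓ' hℓ')).2 (Or.inr hadj)
    · rintro a ha _ ⟨ℓ, hℓ, rfl⟩ hadj
      rw [ψX a ha, ψs ℓ hℓ]
      exact hc ℓ hℓ a ha hadj.symm
  exact hproper

/-- Let `G` be a finite simple graph, `𝒱 = (𝒱_1, …, 𝒱_p)` a partition of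
`V(G)`, `k ≥ 1`, and `U ⊆ V(G)` such that `G - U` is a cluster graph whose connected
components are labelled by `comp : V → Fin r` (so, for `v, w ∉ U`, `comp v = comp w` iff
`v = w` or `v` and `w` are adjacent).  Let `X ⊆ U` contain at most one vertex of each part
of `𝒱`, let `φ'` be a proper `k`-coloring of the subgraph induced by `X`, and let `S` be
the set of indices of parts not hit by `X`.  Suppose there are functions
`s : S → V(G) ∖ U` and `c : S → [k]` such that (i) `s ℓ ∈ 𝒱_ℓ` for every `ℓ ∈ S`,
(ii) no neighbor of `s ℓ` in `X` receives color `c ℓ` under `φ'`, and (iii)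
`ℓ ↦ (c ℓ, comp (s ℓ))` is injective on `S`.  Then `V* = X ∪ {s ℓ : ℓ ∈ S}` is
selective, and the function equal to `φ'` on `X` and to `c ℓ` on `s ℓ` is a proper
`k`-coloring of the subgraph of `G` induced by `V*`. -/
theorem selective_coloring_cluster_sufficiency
    {V : Type*} [Fintype V] [DecidableEq V] (G : SimpleGraph V)
    (p : ℕ) (𝒱 : Fin p → Finset V)
    (hdisj : ∀ ℓ ℓ' : Fin p, ℓ ≠ ℓ' → Disjoint (𝒱 ℓ) (𝒱 ℓ'))
    (hcover : ∀ v : V, ∃ ℓ, v ∈ 𝒱 ℓ)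
    (k : ℕ) (hk : 1 ≤ k)
    (U : Finset V) (r : ℕ) (comp : V → Fin r)
    (hcluster : ∀ v w : V, v ∉ U → w ∉ U →
      (comp v = comp w ↔ (v = w ∨ G.Adj v w)))
    (X : Finset V) (hXU : X ⊆ U)
    (hXone : ∀ ℓ : Fin p, (X ∩ 𝒱 ℓ).card ≤ 1)
    (φ' : V → Fin k)
    (hφ' : ∀ a ∈ X, ∀ b ∈ X, G.Adj a b → φ' a ≠ φ' b)
    (S : Finset (Fin p)) (hS : ∀ ℓ : Fin p, ℓ ∈ S ↔ X ∩ 𝒱 ℓ = ∅)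
    (s : Fin p → V) (c : Fin p → Fin k)
    (hs : ∀ ℓ ∈ S, s ℓ ∉ U ∧ s ℓ ∈ 𝒱 ℓ)
    (hc : ∀ ℓ ∈ S, ∀ w ∈ X, G.Adj (s ℓ) w → φ' w ≠ c ℓ)
    (hinj : ∀ ℓ ∈ S, ∀ ℓ' ∈ S, (c ℓ, comp (s ℓ)) = (c ℓ', comp (s ℓ')) → ℓ = ℓ') :
    (∀ ℓ : Fin p, ((X ∪ S.image s) ∩ 𝒱 ℓ).card = 1) ∧
    ∃ ψ : V → Fin k,
      (∀ x ∈ X, ψ x = φ' x) ∧ (∀ ℓ ∈ S, ψ (s ℓ) = c ℓ) ∧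
      (∀ a ∈ X ∪ S.image s, ∀ b ∈ X ∪ S.image s, G.Adj a b → ψ a ≠ ψ b) :=
  selective_coloring_cluster_sufficiency_general G p 𝒱 hdisj k U r comp hcluster X hXU hXone φ' hφ'
    S hS s c hs hc hinj
end

section
/- Let G and 𝒱 be the graph and partition produced by the composition construction (described in the context) from graphs H_1,…,H_t on vertex set [n] and an integer k ≥ 1. Let G* be an induced subgraph of G whose vertex set contains some y_j ∈ Y and all of Q(G), and let ψ be a proper k-coloring of G*. Then for every vertex u of G* with u ≠ y_j: ψ(u) = ψ(y_j) if and only if u ∉ Q(G). -/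
open Classical
noncomputable section

/-! ## The composition construction

Vertices of the composed graph `G` built from graphs `H 0, …, H (t-1)` on vertex set
`Fin n` and an integer `k ≥ 1`:

* `mkA n t k v u h i` is the gadget vertex `v_i(u)` of `G_v` (for `u ≠ v`), where
  `i : Fin 4` with `i ∈ {0, 1, 2}` encoding colors `1, 2, 3` and `i = 3` encoding `e`;
* `mkQ n t k v q idx` is the `idx`-th vertex of the `q`-th clique of `Q(v)`, where
  `q : Fin 4` encodes `Q_{1,2}(v), Q_{1,3}(v), Q_{2,3}(v), Q_e(v)` (each clique has
  `k - 1` vertices);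
* `mkY n t k j` is the vertex `y_j` of the independent set `Y`. -/
abbrev CompV (n t k : ℕ) : Type :=
  (({p : Fin n × Fin n // p.1 ≠ p.2} × Fin 4) ⊕ (Fin n × Fin 4 × Fin (k - 1))) ⊕ Fin t

def mkA (n t k : ℕ) (v u : Fin n) (h : v ≠ u) (i : Fin 4) : CompV n t k :=
  Sum.inl (Sum.inl (⟨(v, u), h⟩, i))

def mkQ (n t k : ℕ) (v : Fin n) (q : Fin 4) (idx : Fin (k - 1)) : CompV n t k :=
  Sum.inl (Sum.inr (v, q, idx))

def mkY (n t k : ℕ) (j : Fin t) : CompV n t k := Sum.inr j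

/-- Color index `i : Fin 4` belongs to clique index `q : Fin 4`, i.e. `A_i(v)` is
completely joined to the clique `Q_q(v)`:  `q = 0` is `Q_{1,2}`, `q = 1` is `Q_{1,3}`,
`q = 2` is `Q_{2,3}` and `q = 3` is `Q_e` (joined to `A_e(v)`, encoded by `i = 3`). -/
def inCliqueIdx (i q : Fin 4) : Prop :=
  (q = 0 ∧ (i = 0 ∨ i = 1)) ∨ (q = 1 ∧ (i = 0 ∨ i = 2)) ∨
    (q = 2 ∧ (i = 1 ∨ i = 2)) ∨ (q = 3 ∧ i = 3)

/-- Base (one-directional) edge relation of the composed graph; it is symmetrized by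
`SimpleGraph.fromRel` below.  The cases are: complete tripartite joins between
`A_1(v), A_2(v), A_3(v)` and the cross-gadget edges `v_i(u)u_i(v)` for `uv ∈ E(H_j)`;
the joins between `A_i(v)` and the cliques `Q_{i,ℓ}(v)` (and `A_e(v)` with `Q_e(v)`);
the four cliques of each `Q(v)`; edges from each `y_j` to all of `Q(G)`; and the edges
from `y_j` to `v_e(u)` when `uv ∈ E(H_j)` and to `v_1(u), v_2(u), v_3(u)` otherwise. -/
def baseRel (n t k : ℕ) (H : Fin t → SimpleGraph (Fin n)) :
    CompV n t k → CompV n t k → Prop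
  | Sum.inl (Sum.inl (⟨(v, u), _⟩, i)), Sum.inl (Sum.inl (⟨(v', u'), _⟩, i')) =>
      (v = v' ∧ i ≠ i' ∧ i ≠ 3 ∧ i' ≠ 3) ∨
        (i = i' ∧ i ≠ 3 ∧ v' = u ∧ u' = v ∧ ∃ j, (H j).Adj u v)
  | Sum.inl (Sum.inl (⟨(v, _), _⟩, i)), Sum.inl (Sum.inr (v', q, _)) =>
      v = v' ∧ inCliqueIdx i q
  | Sum.inl (Sum.inr (v, q, _)), Sum.inl (Sum.inr (v', q', _)) => v = v' ∧ q = q'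
  | Sum.inr _, Sum.inl (Sum.inr _) => True
  | Sum.inr j, Sum.inl (Sum.inl (⟨(v, u), _⟩, i)) =>
      ((H j).Adj v u ∧ i = 3) ∨ (¬ (H j).Adj v u ∧ i ≠ 3)
  | _, _ => False

/-- The graph `G` produced by the composition construction. -/
def compGraph (n t k : ℕ) (H : Fin t → SimpleGraph (Fin n)) : SimpleGraph (CompV n t k) :=
  SimpleGraph.fromRel (baseRel n t k H)

/-- The set `Q(G) = ⋃_{v} Q(v)` of all clique vertices. -/
def QSet (n t k : ℕ) : Set (CompV n t k) :=
  {x | ∃ v q idx, x = mkQ n t k v q idx}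

/-- The part `Y = {y_1, …, y_t}` of the partition `𝒱`. -/
def YPart (n t k : ℕ) : Finset (CompV n t k) :=
  Finset.univ.image (mkY n t k)

/-- The part `{v_1(u), v_2(u), v_3(u), v_e(u)}` of the partition `𝒱`. -/
def APart (n t k : ℕ) (v : Fin n) (u : {u : Fin n // v ≠ u}) : Finset (CompV n t k) :=
  Finset.univ.image (fun i : Fin 4 => mkA n t k v u.1 u.2 i)

/-- The singleton parts `{x}`, `x ∈ Q(v)`, of the partition `𝒱`. -/
def QSingles (n t k : ℕ) (v : Fin n) : Finset (Finset (CompV n t k)) :=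
  Finset.univ.image (fun p : Fin 4 × Fin (k - 1) => {mkQ n t k v p.1 p.2})

/-- The family `parts(G_v)` of parts contributed by the vertex gadget `G_v`. -/
def partsOf (n t k : ℕ) (v : Fin n) : Finset (Finset (CompV n t k)) :=
  (Finset.univ.image (fun u : {u : Fin n // v ≠ u} => APart n t k v u)) ∪ QSingles n t k v

/-- The partition `𝒱` of `V(G)`: the part `Y`, the parts `{v_1(u), v_2(u), v_3(u), v_e(u)}`
and the singleton parts `{x}` for `x ∈ Q(G)`. -/
def parts (n t k : ℕ) : Finset (Finset (CompV n t k)) :=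
  insert (YPart n t k) (Finset.univ.biUnion (partsOf n t k))

/-- A set of vertices is *selective* if it contains exactly one vertex of each part of
`𝒱` (the parts of `𝒱` cover all of `V(G)`, so it automatically contains no other
vertices). -/
def Selective (n t k : ℕ) (X : Set (CompV n t k)) : Prop :=
  ∀ P ∈ parts n t k, ∃! x, x ∈ X ∧ x ∈ P

/-- The vertex set of the gadget `G_v`. -/
def gadgetVerts (n t k : ℕ) (v : Fin n) : Finset (CompV n t k) :=
  (Finset.univ.image
      (fun p : {u : Fin n // v ≠ u} × Fin 4 => mkA n t k v p.1.1 p.1.2 p.2)) ∪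
    (Finset.univ.image (fun p : Fin 4 × Fin (k - 1) => mkQ n t k v p.1 p.2))


/-! A vertex completely joined to a `(k-1)`-clique must avoid the `k - 1` distinct colors of
that clique, so only one color is left for it. Every vertex outside `Q(G)`, `y_j` included, is
completely joined to some clique `Q_q(v)`, while every vertex of `Q(G)` is adjacent to `y_j`. -/

open Function

theorem Function.Injective.eq_of_notMem_range {ι α : Type*} [Fintype ι] [Fintype α]
    (hcard : Fintype.card α ≤ Fintype.card ι + 1) {f : ι → α} (hf : Injective f)
    {a b : α} (ha : a ∉ Set.range f) (hb : b ∉ Set.range f) : a = b := by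
  have hsmall : (Finset.univ.image f)ᶜ.card ≤ 1 := by
    rw [Finset.card_compl, Finset.card_image_of_injective _ hf, Finset.card_univ]
    omega
  exact Finset.card_le_one.mp hsmall a (by simpa using ha) b (by simpa using hb)

theorem SimpleGraph.color_eq_of_forall_adj_clique {V ι α : Type*} [Fintype ι] [Fintype α]
    (G : SimpleGraph V) (W : Set V) (ψ : V → α)
    (hψ : ∀ a ∈ W, ∀ b ∈ W, G.Adj a b → ψ a ≠ ψ b)
    (hcard : Fintype.card α ≤ Fintype.card ι + 1)
    (s : ι → V) (hsW : ∀ i, s i ∈ W) (hs : Pairwise fun i i' => G.Adj (s i) (s i'))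
    {x y : V} (hx : x ∈ W) (hy : y ∈ W) (hxs : ∀ i, G.Adj x (s i)) (hys : ∀ i, G.Adj y (s i)) :
    ψ x = ψ y := by
  have hinj : Injective (ψ ∘ s) := fun i i' h => by
    by_contra hne
    exact hψ _ (hsW i) _ (hsW i') (hs hne) h
  refine hinj.eq_of_notMem_range hcard ?_ ?_
  · rintro ⟨i, hi⟩
    exact hψ _ hx _ (hsW i) (hxs i) hi.symm
  · rintro ⟨i, hi⟩
    exact hψ _ hy _ (hsW i) (hys i) hi.symm

section Composition

variable {n t k : ℕ} {H : Fin t → SimpleGraph (Fin n)}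

theorem compGraph_adj_mkQ_mkQ {v : Fin n} {q : Fin 4} {idx idx' : Fin (k - 1)}
    (h : idx ≠ idx') : (compGraph n t k H).Adj (mkQ n t k v q idx) (mkQ n t k v q idx') :=
  ⟨by simp [mkQ, h], Or.inl ⟨rfl, rfl⟩⟩

theorem compGraph_adj_mkY_of_mem_QSet (j : Fin t) {x : CompV n t k} (hx : x ∈ QSet n t k) :
    (compGraph n t k H).Adj (mkY n t k j) x := by
  obtain ⟨v, q, idx, rfl⟩ := hx
  exact ⟨by simp [mkY, mkQ], Or.inl trivial⟩

theorem exists_inCliqueIdx (i : Fin 4) : ∃ q, inCliqueIdx i q := by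
  unfold inCliqueIdx
  fin_cases i <;> decide

theorem exists_forall_compGraph_adj_mkQ (hn : 1 ≤ n) {x : CompV n t k} (hx : x ∉ QSet n t k) :
    ∃ v q, ∀ idx, (compGraph n t k H).Adj x (mkQ n t k v q idx) := by
  rcases x with (⟨⟨⟨v, _⟩, _⟩, i⟩ | ⟨v, q, idx⟩) | j
  · obtain ⟨q, hq⟩ := exists_inCliqueIdx i
    exact ⟨v, q, fun _ => ⟨by simp [mkQ], Or.inl ⟨rfl, hq⟩⟩⟩
  · exact absurd ⟨v, q, idx, rfl⟩ hx
  · exact ⟨⟨0, hn⟩, 0, fun idx => compGraph_adj_mkY_of_mem_QSet j ⟨_, _, idx, rfl⟩⟩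

end Composition

theorem comp_color_class_of_yj_general
    (n t k : ℕ) (hn : 2 ≤ n)
    (H : Fin t → SimpleGraph (Fin n)) (j : Fin t)
    (W : Set (CompV n t k)) (hy : mkY n t k j ∈ W) (hQ : QSet n t k ⊆ W)
    (ψ : CompV n t k → Fin k)
    (hψ : ∀ a ∈ W, ∀ b ∈ W, (compGraph n t k H).Adj a b → ψ a ≠ ψ b)
    (u : CompV n t k) (hu : u ∈ W) :
    ψ u = ψ (mkY n t k j) ↔ u ∉ QSet n t k := by
  constructor
  · intro heq huQ
    exact hψ _ hy _ hu (compGraph_adj_mkY_of_mem_QSet j huQ) heq.symm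
  · intro huQ
    obtain ⟨v, q, hadj⟩ := exists_forall_compGraph_adj_mkQ (H := H) (by omega) huQ
    have hk : 0 < k := (ψ u).pos
    exact (compGraph n t k H).color_eq_of_forall_adj_clique W ψ hψ
      (by simp only [Fintype.card_fin]; omega)
      (fun idx => mkQ n t k v q idx) (fun idx => hQ ⟨v, q, idx, rfl⟩)
      (fun _ _ h => compGraph_adj_mkQ_mkQ h) hu hy hadj
      (fun idx => compGraph_adj_mkY_of_mem_QSet j ⟨v, q, idx, rfl⟩)

/-- Observation 6 of the paper.  Let `G` and `𝒱` be produced by the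
composition construction from graphs `H_1, …, H_t` on vertex set `[n]` and `k ≥ 1`.
If `G*` is an induced subgraph of `G` whose vertex set `W` contains some `y_j ∈ Y` and
all of `Q(G)`, and `ψ` is a proper `k`-coloring of `G*`, then every vertex `u ∈ W` with
`u ≠ y_j` satisfies `ψ u = ψ y_j` if and only if `u ∉ Q(G)`. -/
theorem comp_color_class_of_yj
    (n t k : ℕ) (hn : 2 ≤ n) (ht : 1 ≤ t) (hk : 1 ≤ k)
    (H : Fin t → SimpleGraph (Fin n)) (j : Fin t)
    (W : Set (CompV n t k)) (hy : mkY n t k j ∈ W) (hQ : QSet n t k ⊆ W)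
    (ψ : CompV n t k → Fin k)
    (hψ : ∀ a ∈ W, ∀ b ∈ W, (compGraph n t k H).Adj a b → ψ a ≠ ψ b)
    (u : CompV n t k) (hu : u ∈ W) (hne : u ≠ mkY n t k j) :
    ψ u = ψ (mkY n t k j) ↔ u ∉ QSet n t k :=
  comp_color_class_of_yj_general n t k hn H j W hy hQ ψ hψ u hu

end
end

section
/- Let G and 𝒱 be the graph and partition produced by the composition construction (described in the context) from graphs H_1,…,H_t on vertex set [n] and an integer k ≥ 1, let j ∈ [t], and let φ be a proper 3-coloring of H_j. Define X = {y_j} ∪ Q(G) ∪ ⋃_{v ∈ [n]} (A_e(v) ∖ N_G(y_j)) ∪ ⋃_{i ∈ {1,2,3}} ⋃_{v : φ(v)=i} (A_i(v) ∖ N_G(y_j)), where N_G(y_j) denotes the set of neighbors of y_j in G. Then X is a selective set, and X ∖ Q(G) is an independent set in G. -/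
open Classical
noncomputable section

/-! The set `X` picks `y_j`, all of `Q(G)`, and from each part `{v_1(u), v_2(u), v_3(u), v_e(u)}`
the one vertex not adjacent to `y_j`: `v_e(u)` if `uv ∉ E(H_j)`, and `v_{φ(v)}(u)` otherwise.
Outside `Q(G)`, the vertices `v_e(u)` are adjacent only to `Y`, and two picked vertices
`v_i(u)`, `v'_{i'}(u')` with `i, i' ∈ {1, 2, 3}` can only be adjacent inside one gadget
(`v = v'`, `i ≠ i'`), impossible as both colours are `φ(v)`, or across an edge `v_i(u)u_i(v)`,
where `i = φ(v) = φ(u)` contradicts properness of `φ` on the edge `uv` of `H_j`. -/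

namespace CompV

variable {n t k : ℕ}

lemma eq_and_eq_of_mkA_eq {v u v' u' : Fin n} {h : v ≠ u} {h' : v' ≠ u'} {i i' : Fin 4}
    (e : mkA n t k v u h i = mkA n t k v' u' h' i') : v = v' ∧ u = u' ∧ i = i' := by
  simp only [mkA, Sum.inl.injEq, Prod.mk.injEq, Subtype.mk.injEq] at e
  exact ⟨e.1.1, e.1.2, e.2⟩

def selection (j : Fin t) (c : Fin n → Fin n → Fin 4) : Set (CompV n t k) :=
  {mkY n t k j} ∪ QSet n t k ∪ {x | ∃ (v u : Fin n) (h : v ≠ u), x = mkA n t k v u h (c v u)}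

variable {j : Fin t} {c : Fin n → Fin n → Fin 4}

@[simp]
lemma mkY_mem_selection {j' : Fin t} : mkY n t k j' ∈ selection j c ↔ j' = j := by
  simp [selection, QSet, mkY, mkQ, mkA]

@[simp]
lemma mkQ_mem_selection {v : Fin n} {q : Fin 4} {idx : Fin (k - 1)} :
    mkQ n t k v q idx ∈ selection j c :=
  Or.inl (Or.inr ⟨v, q, idx, rfl⟩)

@[simp]
lemma mkA_mem_selection {v u : Fin n} {h : v ≠ u} {i : Fin 4} :
    mkA n t k v u h i ∈ selection j c ↔ i = c v u := by
  refine ⟨fun hx => ?_, fun hi => Or.inr ⟨v, u, h, hi ▸ rfl⟩⟩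
  rcases hx with (hx | ⟨_, _, _, hx⟩) | ⟨v', u', h', hx⟩
  · simp [mkA, mkY] at hx
  · simp [mkA, mkQ] at hx
  · obtain ⟨rfl, rfl, rfl⟩ := eq_and_eq_of_mkA_eq hx
    rfl

lemma selective_selection : Selective n t k (selection j c) := by
  intro P hP
  simp only [parts, Finset.mem_insert, Finset.mem_biUnion, Finset.mem_univ, true_and, partsOf,
    Finset.mem_union, Finset.mem_image, QSingles] at hP
  rcases hP with rfl | ⟨v, ⟨u, rfl⟩ | ⟨⟨q, idx⟩, rfl⟩⟩
  · refine ⟨mkY n t k j, ⟨by simp, by simp [YPart]⟩, ?_⟩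
    rintro x ⟨hx, hxY⟩
    obtain ⟨j', -, rfl⟩ := Finset.mem_image.mp hxY
    rw [mkY_mem_selection.mp hx]
  · refine ⟨mkA n t k v u.1 u.2 (c v u), ⟨by simp, by simp [APart]⟩, ?_⟩
    rintro x ⟨hx, hxA⟩
    obtain ⟨i, -, rfl⟩ := Finset.mem_image.mp hxA
    rw [mkA_mem_selection.mp hx]
  · exact ⟨mkQ n t k v q idx, ⟨by simp, by simp⟩, fun x hx => Finset.mem_singleton.mp hx.2⟩

lemma eq_mkY_or_eq_mkA_of_mem_selection_diff_QSet {x : CompV n t k}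
    (hx : x ∈ selection j c \ QSet n t k) :
    x = mkY n t k j ∨ ∃ (v u : Fin n) (h : v ≠ u), x = mkA n t k v u h (c v u) := by
  obtain ⟨(hY | hQ) | hA, hxQ⟩ := hx
  · exact Or.inl hY
  · exact absurd hQ hxQ
  · exact Or.inr hA

variable {H : Fin t → SimpleGraph (Fin n)}

lemma selection_diff_QSet_independent
    (hY : ∀ v u (h : v ≠ u), ¬ (compGraph n t k H).Adj (mkY n t k j) (mkA n t k v u h (c v u)))
    (hA : ∀ v u v' u' (h : v ≠ u) (h' : v' ≠ u'),
      ¬ (compGraph n t k H).Adj (mkA n t k v u h (c v u)) (mkA n t k v' u' h' (c v' u'))) :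
    ∀ a ∈ selection j c \ QSet n t k, ∀ b ∈ selection j c \ QSet n t k,
      ¬ (compGraph n t k H).Adj a b := by
  intro a ha b hb
  rcases eq_mkY_or_eq_mkA_of_mem_selection_diff_QSet ha with rfl | ⟨v, u, h, rfl⟩ <;>
    rcases eq_mkY_or_eq_mkA_of_mem_selection_diff_QSet hb with rfl | ⟨v', u', h', rfl⟩
  · exact (compGraph n t k H).irrefl
  · exact hY v' u' h'
  · exact fun hab => hY v u h hab.symm
  · exact hA v u v' u' h h'

lemma compGraph_adj_mkY_mkA {v u : Fin n} {h : v ≠ u} {i : Fin 4} :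
    (compGraph n t k H).Adj (mkY n t k j) (mkA n t k v u h i) ↔
      ((H j).Adj v u ∧ i = 3) ∨ (¬ (H j).Adj v u ∧ i ≠ 3) := by
  rw [compGraph, SimpleGraph.fromRel_adj]
  exact ⟨fun ⟨_, hr⟩ => hr.elim id False.elim, fun hr => ⟨by simp [mkY, mkA], Or.inl hr⟩⟩

lemma cases_of_compGraph_adj_mkA_mkA {v u v' u' : Fin n} {h : v ≠ u} {h' : v' ≠ u'}
    {i i' : Fin 4}
    (hadj : (compGraph n t k H).Adj (mkA n t k v u h i) (mkA n t k v' u' h' i')) :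
    i ≠ 3 ∧ i' ≠ 3 ∧ ((v = v' ∧ i ≠ i') ∨ (i = i' ∧ v' = u ∧ u' = v)) := by
  rw [compGraph, SimpleGraph.fromRel_adj] at hadj
  obtain ⟨-, hr⟩ := hadj
  simp only [mkA, baseRel] at hr
  grind

end CompV

open CompV

def colorIdx {n : ℕ} (K : SimpleGraph (Fin n)) (φ : Fin n → Fin 3) (v u : Fin n) : Fin 4 :=
  if K.Adj v u then (φ v).castSucc else 3

lemma castSucc_ne_three (c : Fin 3) : (c.castSucc : Fin 4) ≠ 3 :=
  (Fin.castSucc_lt_last c).ne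

section Coloring

variable {n t k : ℕ} {H : Fin t → SimpleGraph (Fin n)} {j : Fin t} {φ : Fin n → Fin 3}

lemma not_adj_mkY_mkA_colorIdx (v u : Fin n) (h : v ≠ u) :
    ¬ (compGraph n t k H).Adj (mkY n t k j) (mkA n t k v u h (colorIdx (H j) φ v u)) := by
  by_cases hvu : (H j).Adj v u <;>
    simp [compGraph_adj_mkY_mkA, colorIdx, hvu, castSucc_ne_three]

lemma not_adj_mkA_colorIdx (hφ : ∀ a b : Fin n, (H j).Adj a b → φ a ≠ φ b)
    (v u v' u' : Fin n) (h : v ≠ u) (h' : v' ≠ u') :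
    ¬ (compGraph n t k H).Adj (mkA n t k v u h (colorIdx (H j) φ v u))
      (mkA n t k v' u' h' (colorIdx (H j) φ v' u')) := by
  intro hadj
  obtain ⟨hi, hi', hcase⟩ := cases_of_compGraph_adj_mkA_mkA hadj
  have hvu : (H j).Adj v u := by by_contra hn; simp [colorIdx, hn] at hi
  have hvu' : (H j).Adj v' u' := by by_contra hn; simp [colorIdx, hn] at hi'
  simp only [colorIdx, hvu, hvu', if_true, ne_eq, Fin.castSucc_inj] at hcase
  rcases hcase with ⟨rfl, hne⟩ | ⟨heq, rfl, -⟩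
  · exact hne rfl
  · exact hφ v v' hvu heq

lemma nonadj_mkY_union_eq_setOf_colorIdx :
    {x | ∃ (v u : Fin n) (h : v ≠ u), x = mkA n t k v u h 3 ∧
        ¬ (compGraph n t k H).Adj (mkY n t k j) x} ∪
      {x | ∃ (i : Fin 3) (v u : Fin n) (h : v ≠ u), φ v = i ∧
        x = mkA n t k v u h i.castSucc ∧ ¬ (compGraph n t k H).Adj (mkY n t k j) x} =
      {x | ∃ (v u : Fin n) (h : v ≠ u), x = mkA n t k v u h (colorIdx (H j) φ v u)} := by
  ext x
  simp only [Set.mem_union, Set.mem_ofPred_eq]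
  constructor
  · rintro (⟨v, u, h, rfl, hx⟩ | ⟨i, v, u, h, rfl, rfl, hx⟩) <;> refine ⟨v, u, h, ?_⟩ <;>
      by_cases hvu : (H j).Adj v u <;>
      simp_all [compGraph_adj_mkY_mkA, colorIdx, castSucc_ne_three]
  · rintro ⟨v, u, h, rfl⟩
    have hx := not_adj_mkY_mkA_colorIdx (k := k) (H := H) (j := j) (φ := φ) v u h
    by_cases hvu : (H j).Adj v u
    · exact Or.inr ⟨φ v, v, u, h, rfl, by simp [colorIdx, hvu], hx⟩
    · exact Or.inl ⟨v, u, h, by simp [colorIdx, hvu], hx⟩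

end Coloring

theorem comp_forward_selective_and_independent_general
    (n t k : ℕ)
    (H : Fin t → SimpleGraph (Fin n)) (j : Fin t)
    (φ : Fin n → Fin 3) (hφ : ∀ a b : Fin n, (H j).Adj a b → φ a ≠ φ b)
    (X : Set (CompV n t k))
    (hX : X = {mkY n t k j} ∪ QSet n t k ∪
      {x | ∃ (v u : Fin n) (h : v ≠ u), x = mkA n t k v u h 3 ∧
            ¬ (compGraph n t k H).Adj (mkY n t k j) x} ∪
      {x | ∃ (i : Fin 3) (v u : Fin n) (h : v ≠ u), φ v = i ∧
            x = mkA n t k v u h i.castSucc ∧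
            ¬ (compGraph n t k H).Adj (mkY n t k j) x}) :
    Selective n t k X ∧
    ∀ a ∈ X \ QSet n t k, ∀ b ∈ X \ QSet n t k, ¬ (compGraph n t k H).Adj a b := by
  rw [Set.union_assoc, nonadj_mkY_union_eq_setOf_colorIdx] at hX
  subst hX
  exact ⟨selective_selection, selection_diff_QSet_independent not_adj_mkY_mkA_colorIdx
    (not_adj_mkA_colorIdx hφ)⟩

/-- key intermediate claim in the forward direction of Lemma 7.
Let `G` and `𝒱` be produced by the composition construction from `H_1, …, H_t` on
vertex set `[n]` and `k ≥ 1`, let `j ∈ [t]` and let `φ` be a proper `3`-coloring of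
`H_j`.  Let `X = {y_j} ∪ Q(G) ∪ ⋃_v (A_e(v) ∖ N_G(y_j)) ∪
⋃_{i ∈ {1,2,3}} ⋃_{v : φ v = i} (A_i(v) ∖ N_G(y_j))`.  Then `X` is selective and
`X ∖ Q(G)` is an independent set in `G`. -/
theorem comp_forward_selective_and_independent
    (n t k : ℕ) (hn : 2 ≤ n) (ht : 1 ≤ t) (hk : 1 ≤ k)
    (H : Fin t → SimpleGraph (Fin n)) (j : Fin t)
    (φ : Fin n → Fin 3) (hφ : ∀ a b : Fin n, (H j).Adj a b → φ a ≠ φ b)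
    (X : Set (CompV n t k))
    (hX : X = {mkY n t k j} ∪ QSet n t k ∪
      {x | ∃ (v u : Fin n) (h : v ≠ u), x = mkA n t k v u h 3 ∧
            ¬ (compGraph n t k H).Adj (mkY n t k j) x} ∪
      {x | ∃ (i : Fin 3) (v u : Fin n) (h : v ≠ u), φ v = i ∧
            x = mkA n t k v u h i.castSucc ∧
            ¬ (compGraph n t k H).Adj (mkY n t k j) x}) :
    Selective n t k X ∧
    ∀ a ∈ X \ QSet n t k, ∀ b ∈ X \ QSet n t k, ¬ (compGraph n t k H).Adj a b :=
  comp_forward_selective_and_independent_general n t k H j φ hφ X hX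
end
end

section
/- Let G and 𝒱 be the graph and partition produced by the composition construction (described in the context) from graphs H_1,…,H_t on vertex set [n] and an integer k ≥ 1. Then: (i) for every v ∈ [n], the vertex gadget G_v has exactly 4(n + k − 2) vertices and contributes exactly n + 4k − 5 parts to 𝒱; (ii) the set V(G) ∖ Y is a vertex cover of G of size 4n² + 4n(k − 2); and (iii) the total number of parts of 𝒱 is n² + n(4k − 5) + 1. -/
open Classical
noncomputable section

/-!
`Y` is an independent set, so its complement is a vertex cover. Every other vertex lies in
exactly one gadget, which makes the gadgets pairwise disjoint and lets every count be done
gadget by gadget: `G_v` has `4(n - 1)` vertices `v_i(u)` and `4(k - 1)` clique vertices,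
grouped into `n - 1` parts of size four and `4(k - 1)` singletons.
-/

section Composition

variable {n t k : ℕ}

/-- `some v` on the gadget `G_v` and `none` on `Y`. -/
def gadgetIndex : CompV n t k → Option (Fin n)
  | Sum.inl (Sum.inl (p, _)) => some p.1.1
  | Sum.inl (Sum.inr (v, _, _)) => some v
  | Sum.inr _ => none

lemma mem_YPart_iff {x : CompV n t k} : x ∈ YPart n t k ↔ gadgetIndex x = none := by
  rcases x with (_ | _) | _ <;> simp [YPart, mkY, gadgetIndex]

lemma mem_gadgetVerts_iff {v : Fin n} {x : CompV n t k} :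
    x ∈ gadgetVerts n t k v ↔ gadgetIndex x = some v := by
  rcases x with (⟨⟨⟨a, b⟩, hab⟩, i⟩ | ⟨w, q, idx⟩) | j <;>
    simp [gadgetVerts, mkA, mkQ, gadgetIndex, eq_comm]
  rintro rfl
  exact hab

lemma disjoint_gadgetVerts {v w : Fin n} (hvw : v ≠ w) :
    Disjoint (gadgetVerts n t k v) (gadgetVerts n t k w) := by
  rw [Finset.disjoint_left]
  intro x hv hw
  rw [mem_gadgetVerts_iff] at hv hw
  exact hvw (Option.some.inj (hv.symm.trans hw))

lemma disjoint_YPart_gadgetVerts (v : Fin n) : Disjoint (YPart n t k) (gadgetVerts n t k v) := by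
  rw [Finset.disjoint_left]
  intro x hY hv
  rw [mem_YPart_iff] at hY
  rw [mem_gadgetVerts_iff, hY] at hv
  exact Option.some_ne_none v hv.symm

lemma sdiff_YPart_eq_biUnion_gadgetVerts :
    (Finset.univ \ YPart n t k) = Finset.univ.biUnion (gadgetVerts n t k) := by
  ext x
  simp [mem_YPart_iff, mem_gadgetVerts_iff, Option.ne_none_iff_exists']

lemma card_gadgetVerts (v : Fin n) : (gadgetVerts n t k v).card = 4 * (n - 1 + (k - 1)) := by
  have hA : Function.Injective
      (fun p : {u : Fin n // v ≠ u} × Fin 4 => mkA n t k v p.1.1 p.1.2 p.2) := by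
    rintro ⟨⟨u, hu⟩, i⟩ ⟨⟨u', hu'⟩, i'⟩ h
    simp_all [mkA]
  have hQ : Function.Injective (fun p : Fin 4 × Fin (k - 1) => mkQ n t k v p.1 p.2) := by
    rintro ⟨q, idx⟩ ⟨q', idx'⟩ h
    simp_all [mkQ]
  rw [gadgetVerts, Finset.card_union_of_disjoint (by simp [Finset.disjoint_left, mkA, mkQ]),
    Finset.card_image_of_injective _ hA, Finset.card_image_of_injective _ hQ]
  simp only [ne_eq, Finset.card_univ, Fintype.card_prod, Fintype.card_subtype_compl,
    Fintype.card_fin, Fintype.card_unique]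
  ring

lemma mkA_mem_APart (v : Fin n) (u : {u : Fin n // v ≠ u}) (i : Fin 4) :
    mkA n t k v u.1 u.2 i ∈ APart n t k v u :=
  Finset.mem_image_of_mem _ (Finset.mem_univ i)

lemma APart_injective (v : Fin n) : Function.Injective (APart n t k v) := by
  intro u u' h
  have hmem := mkA_mem_APart (t := t) (k := k) v u 0
  rw [h] at hmem
  simp only [APart, mkA, Finset.mem_image] at hmem
  obtain ⟨_, _, hu⟩ := hmem
  simp only [Sum.inl.injEq, Prod.mk.injEq, Subtype.mk.injEq] at hu
  exact Subtype.ext hu.1.2.symm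

lemma card_partsOf (v : Fin n) : (partsOf n t k v).card = n - 1 + 4 * (k - 1) := by
  have hQ : Function.Injective
      (fun p : Fin 4 × Fin (k - 1) => ({mkQ n t k v p.1 p.2} : Finset (CompV n t k))) := by
    rintro ⟨q, idx⟩ ⟨q', idx'⟩ h
    simp_all [mkQ]
  have hdisj : Disjoint (Finset.univ.image (APart n t k v)) (QSingles n t k v) := by
    rw [Finset.disjoint_left]
    intro P hA hQ
    obtain ⟨u, -, rfl⟩ := Finset.mem_image.mp hA
    obtain ⟨p, -, hp⟩ := Finset.mem_image.mp hQ
    have hmem := mkA_mem_APart (t := t) (k := k) v u 0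
    simp [← hp, mkA, mkQ] at hmem
  rw [partsOf, Finset.card_union_of_disjoint hdisj, QSingles,
    Finset.card_image_of_injective _ (APart_injective v), Finset.card_image_of_injective _ hQ]
  simp

lemma subset_gadgetVerts_of_mem_partsOf {v : Fin n} {P : Finset (CompV n t k)}
    (hP : P ∈ partsOf n t k v) : P ⊆ gadgetVerts n t k v := by
  intro x hx
  rw [mem_gadgetVerts_iff]
  simp only [partsOf, QSingles, Finset.mem_union, Finset.mem_image, Finset.mem_univ,
    true_and] at hP
  rcases hP with ⟨u, rfl⟩ | ⟨p, rfl⟩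
  · obtain ⟨i, -, rfl⟩ := Finset.mem_image.mp hx
    rfl
  · rw [Finset.mem_singleton.mp hx]
    rfl

lemma nonempty_of_mem_partsOf {v : Fin n} {P : Finset (CompV n t k)}
    (hP : P ∈ partsOf n t k v) : P.Nonempty := by
  simp only [partsOf, QSingles, Finset.mem_union, Finset.mem_image, Finset.mem_univ,
    true_and] at hP
  rcases hP with ⟨u, rfl⟩ | ⟨p, rfl⟩
  · exact ⟨_, mkA_mem_APart v u 0⟩
  · exact Finset.singleton_nonempty _

lemma disjoint_partsOf {v w : Fin n} (hvw : v ≠ w) :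
    Disjoint (partsOf n t k v) (partsOf n t k w) := by
  rw [Finset.disjoint_left]
  intro P hv hw
  obtain ⟨x, hx⟩ := nonempty_of_mem_partsOf hv
  exact Finset.disjoint_left.mp (disjoint_gadgetVerts hvw)
    (subset_gadgetVerts_of_mem_partsOf hv hx) (subset_gadgetVerts_of_mem_partsOf hw hx)

lemma YPart_notMem_partsOf (v : Fin n) : YPart n t k ∉ partsOf n t k v := by
  intro hY
  have hempty : YPart n t k = ∅ :=
    disjoint_self.mp ((disjoint_YPart_gadgetVerts v).mono_right
      (subset_gadgetVerts_of_mem_partsOf hY))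
  exact (nonempty_of_mem_partsOf hY).ne_empty hempty

lemma card_parts : (parts n t k).card = n * (n - 1 + 4 * (k - 1)) + 1 := by
  have hY : YPart n t k ∉ Finset.univ.biUnion (partsOf n t k) := by
    simpa using YPart_notMem_partsOf
  rw [parts, Finset.card_insert_of_notMem hY,
    Finset.card_biUnion (fun v _ w _ hvw => disjoint_partsOf hvw)]
  simp [card_partsOf]

lemma card_sdiff_YPart :
    (Finset.univ \ YPart n t k).card = n * (4 * (n - 1 + (k - 1))) := by
  rw [sdiff_YPart_eq_biUnion_gadgetVerts,
    Finset.card_biUnion (fun v _ w _ hvw => disjoint_gadgetVerts hvw)]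
  simp [card_gadgetVerts]

lemma isIndepSet_YPart (H : Fin t → SimpleGraph (Fin n)) :
    (compGraph n t k H).IsIndepSet (YPart n t k : Set (CompV n t k)) := by
  intro x hx y hy _ hadj
  obtain ⟨i, -, rfl⟩ := Finset.mem_image.mp hx
  obtain ⟨j, -, rfl⟩ := Finset.mem_image.mp hy
  simp [compGraph, baseRel, mkY] at hadj

lemma isVertexCover_sdiff_YPart (H : Fin t → SimpleGraph (Fin n)) :
    (compGraph n t k H).IsVertexCover ↑(Finset.univ \ YPart n t k) := by
  rw [Finset.coe_sdiff, Finset.coe_univ, ← Set.compl_eq_univ_sdiff]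
  exact SimpleGraph.isVertexCover_compl.mpr (isIndepSet_YPart H)

end Composition

theorem comp_vertex_cover_and_parts_count_general
    (n t k : ℕ) (hk : 1 ≤ k)
    (H : Fin t → SimpleGraph (Fin n)) :
    (∀ v : Fin n,
      ((gadgetVerts n t k v).card : ℤ) = 4 * ((n : ℤ) + (k : ℤ) - 2) ∧
      ((partsOf n t k v).card : ℤ) = (n : ℤ) + 4 * (k : ℤ) - 5) ∧
    ((∀ a b : CompV n t k, (compGraph n t k H).Adj a b →
        a ∈ (Finset.univ \ YPart n t k) ∨ b ∈ (Finset.univ \ YPart n t k)) ∧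
      (((Finset.univ \ YPart n t k : Finset (CompV n t k))).card : ℤ) =
        4 * (n : ℤ) ^ 2 + 4 * (n : ℤ) * ((k : ℤ) - 2)) ∧
    ((parts n t k).card : ℤ) = (n : ℤ) ^ 2 + (n : ℤ) * (4 * (k : ℤ) - 5) + 1 := by
  refine ⟨fun v => ⟨?_, ?_⟩, ⟨fun _ _ hab => isVertexCover_sdiff_YPart H hab, ?_⟩, ?_⟩
  · have := v.pos
    rw [card_gadgetVerts]
    omega
  · have := v.pos
    rw [card_partsOf]
    omega
  all_goals
    simp only [card_sdiff_YPart, card_parts]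
    rcases Nat.eq_zero_or_pos n with rfl | hn
    · simp
    · push_cast [Nat.cast_sub hn, Nat.cast_sub hk]
      ring

/-- Lemma 8 of the paper.  Let `G` and `𝒱` be produced by the
composition construction from graphs `H_1, …, H_t` on vertex set `[n]` and `k ≥ 1`.
Then (i) each vertex gadget `G_v` has exactly `4(n + k - 2)` vertices and contributes
exactly `n + 4k - 5` parts to `𝒱`; (ii) `V(G) ∖ Y` is a vertex cover of `G` of size
`4n² + 4n(k - 2)`; and (iii) `𝒱` has exactly `n² + n(4k - 5) + 1` parts.
(The cardinalities are stated in `ℤ`, as in the paper's arithmetic.) -/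
theorem comp_vertex_cover_and_parts_count
    (n t k : ℕ) (hn : 2 ≤ n) (ht : 1 ≤ t) (hk : 1 ≤ k)
    (H : Fin t → SimpleGraph (Fin n)) :
    (∀ v : Fin n,
      ((gadgetVerts n t k v).card : ℤ) = 4 * ((n : ℤ) + (k : ℤ) - 2) ∧
      ((partsOf n t k v).card : ℤ) = (n : ℤ) + 4 * (k : ℤ) - 5) ∧
    ((∀ a b : CompV n t k, (compGraph n t k H).Adj a b →
        a ∈ (Finset.univ \ YPart n t k) ∨ b ∈ (Finset.univ \ YPart n t k)) ∧
      (((Finset.univ \ YPart n t k : Finset (CompV n t k))).card : ℤ) =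
        4 * (n : ℤ) ^ 2 + 4 * (n : ℤ) * ((k : ℤ) - 2)) ∧
    ((parts n t k).card : ℤ) = (n : ℤ) ^ 2 + (n : ℤ) * (4 * (k : ℤ) - 5) + 1 :=
  comp_vertex_cover_and_parts_count_general n t k hk H

end
end
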